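/- arXiv:2209.06490 — 8 statements merged into one kernel-verified Lean document; each statement's English description precedes it below -/
import Mathlib

section
/- Let A be a unital complex Banach algebra, let D, η ∈ A, let d ∈ ℝ be a scalar, and set h := d·1 + η. Then cosh(dD)·cosh(Dη) + sinh(dD)·sinh(Dη) = cosh(Dh), where cosh(dD) := Σ_{n≥0} d^{2n}D^{2n}/(2n)!, sinh(dD) := Σ_{n≥0} d^{2n+1}D^{2n+1}/(2n+1)!, cosh(Dη) := Σ_{n≥0} D^{2n}η^{2n}/(2n)!, sinh(Dη) := Σ_{n≥0} D^{2n+1}η^{2n+1}/(2n+1)!, and cosh(Dh) := Σ_{n≥0} D^{2n}h^{2n}/(2n)! (all series converge absolutely; the order of the factors matters since D and η need not commute). -/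
/-!
Put `e(E) := ∑ Dⁿ Eⁿ / n!`. If `E` commutes with `D` and with `F`, the Cauchy product and the
binomial theorem give `e(E + F) = e(E) e(F)` despite the ordering of the factors; here `E = d • 1`.
Write `e = C + S` for the splitting into even and odd terms, so that `e(-E) = C(E) - S(E)`.
Adding the addition formulas for `(E, F)` and `(-E, -F)` gives
`2 C(E + F) = 2 (C(E) C(F) + S(E) S(F))`.
-/

open scoped Nat

noncomputable section

open Finset

variable (𝕂 : Type*) {A : Type*} [RCLike 𝕂] [NormedRing A] [NormedAlgebra 𝕂 A]

def orderedExpTerm (D E : A) (n : ℕ) : A := ((n ! : 𝕂))⁻¹ • (D ^ n * E ^ n)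

def orderedExp (D E : A) : A := ∑' n, orderedExpTerm 𝕂 D E n

def orderedCosh (D E : A) : A := ∑' n, orderedExpTerm 𝕂 D E (2 * n)

def orderedSinh (D E : A) : A := ∑' n, orderedExpTerm 𝕂 D E (2 * n + 1)

variable {𝕂}

theorem orderedExpTerm_smul_one (D : A) (z : 𝕂) (n : ℕ) :
    orderedExpTerm 𝕂 D (z • (1 : A)) n = (z ^ n / (n ! : 𝕂)) • D ^ n := by
  rw [orderedExpTerm, smul_pow, one_pow, mul_smul_comm, mul_one, smul_smul, div_eq_inv_mul]

theorem orderedExpTerm_neg (D E : A) (n : ℕ) :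
    orderedExpTerm 𝕂 D (-E) n = ((-1 : 𝕂) ^ n) • orderedExpTerm 𝕂 D E n := by
  rw [orderedExpTerm, orderedExpTerm, ← neg_one_smul 𝕂 E, smul_pow, mul_smul_comm, smul_comm]

theorem summable_norm_orderedExpTerm (D E : A) :
    Summable fun n => ‖orderedExpTerm 𝕂 D E n‖ := by
  rw [← summable_nat_add_iff 1]
  have hbound := (summable_nat_add_iff 1).mpr (Real.summable_pow_div_factorial (‖D‖ * ‖E‖))
  refine hbound.of_nonneg_of_le (fun _ => norm_nonneg _) fun n => ?_
  have hpos : 0 < n + 1 := n.succ_pos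
  calc ‖orderedExpTerm 𝕂 D E (n + 1)‖ = ‖D ^ (n + 1) * E ^ (n + 1)‖ / (n + 1)! := by
        rw [orderedExpTerm, norm_smul, norm_inv, RCLike.norm_natCast, inv_mul_eq_div]
    _ ≤ (‖D‖ * ‖E‖) ^ (n + 1) / (n + 1)! := by
        gcongr
        calc ‖D ^ (n + 1) * E ^ (n + 1)‖ ≤ ‖D ^ (n + 1)‖ * ‖E ^ (n + 1)‖ := norm_mul_le _ _
          _ ≤ ‖D‖ ^ (n + 1) * ‖E‖ ^ (n + 1) := by
            gcongr <;> exact norm_pow_le' _ hpos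
          _ = (‖D‖ * ‖E‖) ^ (n + 1) := (mul_pow _ _ _).symm

theorem sum_antidiagonal_orderedExpTerm_mul {D E F : A} (hDE : Commute D E) (hEF : Commute E F)
    (n : ℕ) :
    ∑ p ∈ antidiagonal n, orderedExpTerm 𝕂 D E p.1 * orderedExpTerm 𝕂 D F p.2 =
      orderedExpTerm 𝕂 D (E + F) n := by
  rw [orderedExpTerm, hEF.add_pow', mul_sum, smul_sum]
  refine sum_congr rfl fun ⟨i, j⟩ hij => ?_
  rw [HasAntidiagonal.mem_antidiagonal] at hij
  subst hij
  have hmove : D ^ i * E ^ i * (D ^ j * F ^ j) = D ^ (i + j) * (E ^ i * F ^ j) := by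
    rw [mul_assoc, ← mul_assoc (E ^ i), ← (hDE.pow_pow j i).eq, pow_add]
    noncomm_ring
  rw [orderedExpTerm, orderedExpTerm, smul_mul_smul_comm, hmove, ← Nat.cast_smul_eq_nsmul 𝕂,
    mul_smul_comm, smul_smul, Nat.cast_add_choose]
  congr 1
  have hfact : ((i + j)! : 𝕂) ≠ 0 := Nat.cast_ne_zero.mpr (Nat.factorial_ne_zero _)
  field_simp

theorem summable_norm_orderedExpTerm_two_mul (D E : A) :
    Summable fun n => ‖orderedExpTerm 𝕂 D E (2 * n)‖ :=
  (summable_norm_orderedExpTerm D E).comp_injective (mul_right_injective₀ two_ne_zero)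

theorem summable_norm_orderedExpTerm_two_mul_add_one (D E : A) :
    Summable fun n => ‖orderedExpTerm 𝕂 D E (2 * n + 1)‖ :=
  (summable_norm_orderedExpTerm D E).comp_injective
    ((add_left_injective 1).comp (mul_right_injective₀ two_ne_zero))

theorem orderedCosh_neg (D E : A) : orderedCosh 𝕂 D (-E) = orderedCosh 𝕂 D E := by
  simp only [orderedCosh, orderedExpTerm_neg, pow_mul, neg_one_sq, one_pow, one_smul]

theorem orderedSinh_neg (D E : A) : orderedSinh 𝕂 D (-E) = -orderedSinh 𝕂 D E := by
  simp only [orderedSinh, orderedExpTerm_neg, Odd.neg_one_pow, odd_two_mul_add_one, neg_one_smul,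
    tsum_neg]

variable [CompleteSpace A]

theorem orderedExp_eq_orderedCosh_add_orderedSinh (D E : A) :
    orderedExp 𝕂 D E = orderedCosh 𝕂 D E + orderedSinh 𝕂 D E :=
  (tsum_even_add_odd (summable_norm_orderedExpTerm_two_mul D E).of_norm
    (summable_norm_orderedExpTerm_two_mul_add_one D E).of_norm).symm

theorem orderedExp_add {D E F : A} (hDE : Commute D E) (hEF : Commute E F) :
    orderedExp 𝕂 D (E + F) = orderedExp 𝕂 D E * orderedExp 𝕂 D F := by
  rw [orderedExp, orderedExp, orderedExp, tsum_mul_tsum_eq_tsum_sum_antidiagonal_of_summable_norm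
    (summable_norm_orderedExpTerm D E) (summable_norm_orderedExpTerm D F)]
  exact tsum_congr fun n => (sum_antidiagonal_orderedExpTerm_mul hDE hEF n).symm

theorem orderedCosh_add {D E F : A} (hDE : Commute D E) (hEF : Commute E F) :
    orderedCosh 𝕂 D (E + F) =
      orderedCosh 𝕂 D E * orderedCosh 𝕂 D F + orderedSinh 𝕂 D E * orderedSinh 𝕂 D F := by
  have hplus := orderedExp_add (𝕂 := 𝕂) hDE hEF
  have hminus := orderedExp_add (𝕂 := 𝕂) hDE.neg_right hEF.neg_left.neg_right
  rw [← neg_add] at hminus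
  simp only [orderedExp_eq_orderedCosh_add_orderedSinh, orderedCosh_neg, orderedSinh_neg,
    ← sub_eq_add_neg] at hplus hminus
  generalize orderedCosh 𝕂 D (E + F) = c, orderedSinh 𝕂 D (E + F) = s, orderedCosh 𝕂 D E = cE,
    orderedSinh 𝕂 D E = sE, orderedCosh 𝕂 D F = cF, orderedSinh 𝕂 D F = sF at hplus hminus ⊢
  refine smul_right_injective A (two_ne_zero' 𝕂) ?_
  simp only [two_smul]
  calc c + c = (c + s) + (c - s) := by abel
    _ = _ := by rw [hplus, hminus]; noncomm_ring

end

/-- Constant-depth identity `cosh(dD)·cosh(Dη) + sinh(dD)·sinh(Dη) = cosh(Dh)`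
in a unital complex Banach algebra, with `h = d·1 + η`. -/
theorem stmt_0 (A : Type*) [NormedRing A] [NormedAlgebra ℂ A] [CompleteSpace A]
    (D η : A) (d : ℝ) (h : A) (hdef : h = (d : ℂ) • (1 : A) + η) :
    (Summable fun n : ℕ => ‖((d : ℂ) ^ (2 * n) / ((2 * n)! : ℂ)) • D ^ (2 * n)‖) ∧
    (Summable fun n : ℕ => ‖((d : ℂ) ^ (2 * n + 1) / ((2 * n + 1)! : ℂ)) • D ^ (2 * n + 1)‖) ∧
    (Summable fun n : ℕ => ‖(((2 * n)! : ℂ))⁻¹ • (D ^ (2 * n) * η ^ (2 * n))‖) ∧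
    (Summable fun n : ℕ => ‖(((2 * n + 1)! : ℂ))⁻¹ • (D ^ (2 * n + 1) * η ^ (2 * n + 1))‖) ∧
    (Summable fun n : ℕ => ‖(((2 * n)! : ℂ))⁻¹ • (D ^ (2 * n) * h ^ (2 * n))‖) ∧
    (∑' n : ℕ, ((d : ℂ) ^ (2 * n) / ((2 * n)! : ℂ)) • D ^ (2 * n)) *
        (∑' n : ℕ, (((2 * n)! : ℂ))⁻¹ • (D ^ (2 * n) * η ^ (2 * n))) +
      (∑' n : ℕ, ((d : ℂ) ^ (2 * n + 1) / ((2 * n + 1)! : ℂ)) • D ^ (2 * n + 1)) *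
        (∑' n : ℕ, (((2 * n + 1)! : ℂ))⁻¹ • (D ^ (2 * n + 1) * η ^ (2 * n + 1))) =
      ∑' n : ℕ, (((2 * n)! : ℂ))⁻¹ • (D ^ (2 * n) * h ^ (2 * n)) := by
  subst hdef
  simp only [← orderedExpTerm_smul_one]
  exact ⟨summable_norm_orderedExpTerm_two_mul D _,
    summable_norm_orderedExpTerm_two_mul_add_one D _,
    summable_norm_orderedExpTerm_two_mul D η,
    summable_norm_orderedExpTerm_two_mul_add_one D η,
    summable_norm_orderedExpTerm_two_mul D _,
    (orderedCosh_add ((Commute.one_right D).smul_right _) ((Commute.one_left η).smul_left _)).symm⟩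
end

section
/- Let A be a unital complex Banach algebra, let D, η ∈ A, let d ∈ ℝ be a scalar, and set h := d·1 + η. Then sinh(dD)·cosh(Dη) + cosh(dD)·sinh(Dη) = sinh(Dh), where cosh(dD) := Σ_{n≥0} d^{2n}D^{2n}/(2n)!, sinh(dD) := Σ_{n≥0} d^{2n+1}D^{2n+1}/(2n+1)!, cosh(Dη) := Σ_{n≥0} D^{2n}η^{2n}/(2n)!, sinh(Dη) := Σ_{n≥0} D^{2n+1}η^{2n+1}/(2n+1)!, and sinh(Dh) := Σ_{n≥0} D^{2n+1}h^{2n+1}/(2n+1)! (all series converge absolutely). -/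
open scoped Nat
open Finset

/-!
Write `u k = (d ^ k / k!) • D ^ k` and `v k = (k!)⁻¹ • (D ^ k * η ^ k)`. Since `d • 1` is central and
`D ^ (i + j) = D ^ i * D ^ j`, the binomial theorem identifies the Cauchy product
`∑_{i + j = m} u i * v j` with `(m!)⁻¹ • (D ^ m * h ^ m)`. The left-hand side of the identity is
exactly the part of the Cauchy product of `∑ u` and `∑ v` with `i + j` odd.
-/

theorem Finset.Nat.sum_antidiagonal_two_mul_add_one {M : Type*} [AddCommMonoid M]
    (f : ℕ → ℕ → M) (n : ℕ) :
    ∑ p ∈ antidiagonal (2 * n + 1), f p.1 p.2 =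
      ∑ p ∈ antidiagonal n, (f (2 * p.1 + 1) (2 * p.2) + f (2 * p.1) (2 * p.2 + 1)) := by
  induction n generalizing f with
  | zero => simp [Nat.sum_antidiagonal_succ, add_comm]
  | succ n ih =>
    rw [show 2 * (n + 1) + 1 = 2 * n + 1 + 1 + 1 by ring, Nat.sum_antidiagonal_succ (n := 2 * n + 2),
      Nat.sum_antidiagonal_succ (n := 2 * n + 1), ih fun i j => f (i + 1 + 1) j,
      Nat.sum_antidiagonal_succ (n := n), ← add_assoc]
    simp only [mul_add, mul_zero, zero_add, mul_one, add_assoc, add_comm (f 0 _), one_add_one_eq_two,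
      Nat.reduceAdd]

theorem sum_antidiagonal_smul_pow_mul_smul_pow_mul_pow {𝕜 A : Type*} [Field 𝕜] [CharZero 𝕜]
    [Ring A] [Algebra 𝕜 A] (c : 𝕜) (D a : A) (m : ℕ) :
    ∑ p ∈ antidiagonal m, ((c ^ p.1 / p.1 !) • D ^ p.1) * ((p.2 ! : 𝕜)⁻¹ • (D ^ p.2 * a ^ p.2)) =
      (m ! : 𝕜)⁻¹ • (D ^ m * (c • 1 + a) ^ m) := by
  rw [((Commute.one_left a).smul_left c).add_pow', mul_sum, smul_sum]
  refine sum_congr rfl fun ⟨i, j⟩ hij => ?_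
  rw [HasAntidiagonal.mem_antidiagonal] at hij
  subst hij
  simp only [smul_pow, one_pow, smul_mul_assoc, one_mul, mul_smul_comm,
    ← Nat.cast_smul_eq_nsmul 𝕜, smul_smul, ← mul_assoc, ← pow_add]
  congr 1
  have : ((i + j)! : 𝕜) ≠ 0 := Nat.cast_ne_zero.2 (Nat.factorial_ne_zero _)
  rw [Nat.cast_add_choose]
  field_simp

theorem Summable.comp_two_mul_and_comp_two_mul_add_one {f : ℕ → ℝ} (hf : Summable f) :
    Summable (fun n => f (2 * n)) ∧ Summable (fun n => f (2 * n + 1)) :=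
  have hevn : Function.Injective (2 * · : ℕ → ℕ) := mul_right_injective₀ two_ne_zero
  ⟨hf.comp_injective hevn, hf.comp_injective ((add_left_injective 1).comp hevn)⟩

theorem tsum_odd_mul_tsum_even_add_tsum_even_mul_tsum_odd {A : Type*} [NormedRing A]
    [CompleteSpace A] {u v : ℕ → A} (hu : Summable (‖u ·‖)) (hv : Summable (‖v ·‖)) :
    (∑' n, u (2 * n + 1)) * (∑' n, v (2 * n)) + (∑' n, u (2 * n)) * (∑' n, v (2 * n + 1)) =
      ∑' n, ∑ p ∈ antidiagonal (2 * n + 1), u p.1 * v p.2 := by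
  obtain ⟨hue, huo⟩ := hu.comp_two_mul_and_comp_two_mul_add_one
  obtain ⟨hve, hvo⟩ := hv.comp_two_mul_and_comp_two_mul_add_one
  rw [tsum_mul_tsum_eq_tsum_sum_antidiagonal_of_summable_norm huo hve,
    tsum_mul_tsum_eq_tsum_sum_antidiagonal_of_summable_norm hue hvo,
    ← (summable_norm_sum_mul_antidiagonal_of_summable_norm huo hve).of_norm.tsum_add
      (summable_norm_sum_mul_antidiagonal_of_summable_norm hue hvo).of_norm]
  simp only [Nat.sum_antidiagonal_two_mul_add_one fun i j => u i * v j, sum_add_distrib]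

theorem summable_norm_of_norm_le_pow_div_factorial {E : Type*} [SeminormedAddCommGroup E]
    {f : ℕ → E} (r : ℝ) (hf : ∀ k, 0 < k → ‖f k‖ ≤ r ^ k / k !) : Summable (‖f ·‖) :=
  Summable.of_norm_bounded_eventually_nat (Real.summable_pow_div_factorial r)
    (Filter.eventually_atTop.2 ⟨1, fun k hk => by simpa using hf k hk⟩)

section

variable {𝕜 A : Type*} [RCLike 𝕜] [NormedRing A] [NormedAlgebra 𝕜 A]

theorem summable_norm_pow_div_factorial_smul_pow (c : 𝕜) (D : A) :
    Summable fun k => ‖(c ^ k / k ! : 𝕜) • D ^ k‖ := by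
  refine summable_norm_of_norm_le_pow_div_factorial (‖c‖ * ‖D‖) fun k hk => ?_
  rw [norm_smul, norm_div, norm_pow, RCLike.norm_natCast, mul_pow, mul_div_right_comm]
  gcongr
  exact norm_pow_le' D hk

theorem summable_norm_inv_factorial_smul_pow_mul_pow (D a : A) :
    Summable fun k => ‖(k ! : 𝕜)⁻¹ • (D ^ k * a ^ k)‖ := by
  refine summable_norm_of_norm_le_pow_div_factorial (‖D‖ * ‖a‖) fun k hk => ?_
  rw [norm_smul, norm_inv, RCLike.norm_natCast, mul_pow, inv_mul_eq_div]
  gcongr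
  exact (norm_mul_le _ _).trans (mul_le_mul (norm_pow_le' D hk) (norm_pow_le' a hk)
    (norm_nonneg _) (by positivity))

end

/-- Constant-depth identity `sinh(dD)·cosh(Dη) + cosh(dD)·sinh(Dη) = sinh(Dh)`
in a unital complex Banach algebra, with `h = d·1 + η`. -/
theorem stmt_1 (A : Type*) [NormedRing A] [NormedAlgebra ℂ A] [CompleteSpace A]
    (D η : A) (d : ℝ) (h : A) (hdef : h = (d : ℂ) • (1 : A) + η) :
    (Summable fun n : ℕ => ‖((d : ℂ) ^ (2 * n) / ((2 * n)! : ℂ)) • D ^ (2 * n)‖) ∧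
    (Summable fun n : ℕ => ‖((d : ℂ) ^ (2 * n + 1) / ((2 * n + 1)! : ℂ)) • D ^ (2 * n + 1)‖) ∧
    (Summable fun n : ℕ => ‖(((2 * n)! : ℂ))⁻¹ • (D ^ (2 * n) * η ^ (2 * n))‖) ∧
    (Summable fun n : ℕ => ‖(((2 * n + 1)! : ℂ))⁻¹ • (D ^ (2 * n + 1) * η ^ (2 * n + 1))‖) ∧
    (Summable fun n : ℕ => ‖(((2 * n + 1)! : ℂ))⁻¹ • (D ^ (2 * n + 1) * h ^ (2 * n + 1))‖) ∧
    (∑' n : ℕ, ((d : ℂ) ^ (2 * n + 1) / ((2 * n + 1)! : ℂ)) • D ^ (2 * n + 1)) *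
        (∑' n : ℕ, (((2 * n)! : ℂ))⁻¹ • (D ^ (2 * n) * η ^ (2 * n))) +
      (∑' n : ℕ, ((d : ℂ) ^ (2 * n) / ((2 * n)! : ℂ)) • D ^ (2 * n)) *
        (∑' n : ℕ, (((2 * n + 1)! : ℂ))⁻¹ • (D ^ (2 * n + 1) * η ^ (2 * n + 1))) =
      ∑' n : ℕ, (((2 * n + 1)! : ℂ))⁻¹ • (D ^ (2 * n + 1) * h ^ (2 * n + 1)) := by
  have hu := summable_norm_pow_div_factorial_smul_pow (d : ℂ) D
  have hv (a : A) := summable_norm_inv_factorial_smul_pow_mul_pow (𝕜 := ℂ) D a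
  obtain ⟨hue, huo⟩ := hu.comp_two_mul_and_comp_two_mul_add_one
  obtain ⟨hve, hvo⟩ := (hv η).comp_two_mul_and_comp_two_mul_add_one
  refine ⟨hue, huo, hve, hvo, (hv h).comp_two_mul_and_comp_two_mul_add_one.2, ?_⟩
  rw [tsum_odd_mul_tsum_even_add_tsum_even_mul_tsum_odd hu (hv η), hdef]
  exact tsum_congr fun n => sum_antidiagonal_smul_pow_mul_smul_pow_mul_pow _ D η _
end

section
/- Let A be a unital complex Banach algebra, let D, η ∈ A, let d ∈ ℝ be a scalar, and set h := d·1 + η. Then cosh(ηD)·cosh(Dd) + sinh(ηD)·sinh(Dd) = cosh(hD), where cosh(ηD) := Σ_{n≥0} η^{2n}D^{2n}/(2n)!, sinh(ηD) := Σ_{n≥0} η^{2n+1}D^{2n+1}/(2n+1)!, cosh(Dd) := Σ_{n≥0} d^{2n}D^{2n}/(2n)!, sinh(Dd) := Σ_{n≥0} d^{2n+1}D^{2n+1}/(2n+1)!, and cosh(hD) := Σ_{n≥0} h^{2n}D^{2n}/(2n)! (all series converge absolutely). -/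
/-! With `E(x) = Σ xⁿDⁿ/n!`, the series `cosh(xD)` and `sinh(xD)` are the even and odd parts of
`E`, so `cosh ± sinh = E(±x)`. If `c` commutes with `x` and `D`, the Cauchy product and the
binomial theorem give `E(x) E(c) = E(x + c)`; adding this identity to the one for `(-x, -c)` yields
`2 (cosh cosh + sinh sinh) = E(x + c) + E(-(x + c)) = 2 cosh((x + c)D)`. A real scalar `d • 1` is
such a `c`. -/

open scoped Nat
open Finset

section RevExp

variable {𝕜 A : Type*} [RCLike 𝕜] [NormedRing A] [NormedAlgebra 𝕜 A]

variable (𝕜) in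
noncomputable def revExpTerm (D x : A) (n : ℕ) : A := ((n ! : 𝕜))⁻¹ • (x ^ n * D ^ n)

theorem summable_norm_revExpTerm (D x : A) : Summable fun n => ‖revExpTerm 𝕜 D x n‖ := by
  refine .of_norm_bounded_eventually_nat (Real.summable_pow_div_factorial (‖x‖ * ‖D‖)) ?_
  filter_upwards [Filter.eventually_ge_atTop 1] with n hn
  rw [norm_norm, revExpTerm, norm_smul, norm_inv, RCLike.norm_natCast, div_eq_inv_mul, mul_pow]
  gcongr
  exact (norm_mul_le _ _).trans
    (mul_le_mul (norm_pow_le' x hn) (norm_pow_le' D hn) (norm_nonneg _) (by positivity))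

theorem summable_norm_revExpTerm_two_mul (D x : A) :
    Summable fun n => ‖revExpTerm 𝕜 D x (2 * n)‖ :=
  (summable_norm_revExpTerm D x).comp_injective (mul_right_injective₀ two_ne_zero)

theorem summable_norm_revExpTerm_two_mul_add_one (D x : A) :
    Summable fun n => ‖revExpTerm 𝕜 D x (2 * n + 1)‖ :=
  (summable_norm_revExpTerm D x).comp_injective fun _ _ h => by simpa using h

theorem revExpTerm_smul_one (D : A) (s : 𝕜) (n : ℕ) :
    revExpTerm 𝕜 D (s • (1 : A)) n = (s ^ n / (n ! : 𝕜)) • D ^ n := by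
  rw [revExpTerm, smul_pow, one_pow, smul_mul_assoc, one_mul, smul_smul, div_eq_inv_mul]

theorem revExpTerm_neg_two_mul (D x : A) (n : ℕ) :
    revExpTerm 𝕜 D (-x) (2 * n) = revExpTerm 𝕜 D x (2 * n) := by
  rw [revExpTerm, revExpTerm, Even.neg_pow (even_two_mul n)]

theorem revExpTerm_neg_two_mul_add_one (D x : A) (n : ℕ) :
    revExpTerm 𝕜 D (-x) (2 * n + 1) = -revExpTerm 𝕜 D x (2 * n + 1) := by
  rw [revExpTerm, revExpTerm, Odd.neg_pow (odd_two_mul_add_one n), neg_mul, smul_neg]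

theorem revExpTerm_mul_revExpTerm {D x c : A} (hcD : Commute c D) (k l : ℕ) :
    revExpTerm 𝕜 D x k * revExpTerm 𝕜 D c l
      = ((k ! : 𝕜)⁻¹ * (l ! : 𝕜)⁻¹) • (x ^ k * c ^ l * D ^ (k + l)) := by
  rw [revExpTerm, revExpTerm, smul_mul_smul_comm, pow_add, mul_assoc, ← mul_assoc (D ^ k),
    ← (hcD.pow_pow l k).eq, mul_assoc, mul_assoc]

variable (𝕜) in
noncomputable def revExp (D x : A) : A := ∑' n, revExpTerm 𝕜 D x n

variable (𝕜) in
/-- The paper's `cosh(xD)`: all powers of `x` stand to the left of the powers of `D`, so this is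
not `cosh (x * D)` unless `x` and `D` commute. -/
noncomputable def revCosh (D x : A) : A := ∑' n, revExpTerm 𝕜 D x (2 * n)

variable (𝕜) in
noncomputable def revSinh (D x : A) : A := ∑' n, revExpTerm 𝕜 D x (2 * n + 1)

variable [CompleteSpace A]

theorem revCosh_add_revSinh (D x : A) : revCosh 𝕜 D x + revSinh 𝕜 D x = revExp 𝕜 D x :=
  tsum_even_add_odd (summable_norm_revExpTerm_two_mul D x).of_norm
    (summable_norm_revExpTerm_two_mul_add_one D x).of_norm

theorem revCosh_sub_revSinh (D x : A) : revCosh 𝕜 D x - revSinh 𝕜 D x = revExp 𝕜 D (-x) := by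
  rw [← revCosh_add_revSinh, revCosh, revSinh, revCosh, revSinh,
    tsum_congr (revExpTerm_neg_two_mul D x), tsum_congr (revExpTerm_neg_two_mul_add_one D x),
    tsum_neg, sub_eq_add_neg]

theorem revExp_mul_revExp_of_commute {D x c : A} (hcx : Commute c x) (hcD : Commute c D) :
    revExp 𝕜 D x * revExp 𝕜 D c = revExp 𝕜 D (x + c) := by
  rw [revExp, revExp, tsum_mul_tsum_eq_tsum_sum_antidiagonal_of_summable_norm
    (summable_norm_revExpTerm D x) (summable_norm_revExpTerm D c), revExp]
  refine tsum_congr fun n => ?_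
  rw [revExpTerm, hcx.symm.add_pow', sum_mul, smul_sum]
  refine sum_congr rfl fun kl hkl => ?_
  obtain rfl : kl.1 + kl.2 = n := mem_antidiagonal.mp hkl
  rw [revExpTerm_mul_revExpTerm hcD, smul_mul_assoc, ← Nat.cast_smul_eq_nsmul 𝕜, smul_smul,
    Nat.cast_add_choose]
  congr 1
  rw [← mul_inv, mul_div_assoc', inv_mul_cancel₀ (Nat.cast_ne_zero.mpr (Nat.factorial_ne_zero _)),
    one_div]

theorem revCosh_mul_add_revSinh_mul_of_commute {D x c : A} (hcx : Commute c x)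
    (hcD : Commute c D) :
    revCosh 𝕜 D x * revCosh 𝕜 D c + revSinh 𝕜 D x * revSinh 𝕜 D c = revCosh 𝕜 D (x + c) := by
  refine smul_right_injective A (two_ne_zero : (2 : 𝕜) ≠ 0) ?_
  calc (2 : 𝕜) • (revCosh 𝕜 D x * revCosh 𝕜 D c + revSinh 𝕜 D x * revSinh 𝕜 D c)
      = (revCosh 𝕜 D x + revSinh 𝕜 D x) * (revCosh 𝕜 D c + revSinh 𝕜 D c)
        + (revCosh 𝕜 D x - revSinh 𝕜 D x) * (revCosh 𝕜 D c - revSinh 𝕜 D c) := by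
        rw [two_smul]; noncomm_ring
    _ = revExp 𝕜 D (x + c) + revExp 𝕜 D (-(x + c)) := by
        rw [revCosh_add_revSinh, revCosh_add_revSinh, revCosh_sub_revSinh, revCosh_sub_revSinh,
          revExp_mul_revExp_of_commute hcx hcD,
          revExp_mul_revExp_of_commute hcx.neg_left.neg_right hcD.neg_left, neg_add]
    _ = (2 : 𝕜) • revCosh 𝕜 D (x + c) := by
        rw [← revCosh_add_revSinh, ← revCosh_sub_revSinh, two_smul]; abel

end RevExp

/-- Constant-depth identity `cosh(ηD)·cosh(Dd) + sinh(ηD)·sinh(Dd) = cosh(hD)`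
in a unital complex Banach algebra, with `h = d·1 + η`. -/
theorem stmt_3 (A : Type*) [NormedRing A] [NormedAlgebra ℂ A] [CompleteSpace A]
    (D η : A) (d : ℝ) (h : A) (hdef : h = (d : ℂ) • (1 : A) + η) :
    (Summable fun n : ℕ => ‖(((2 * n)! : ℂ))⁻¹ • (η ^ (2 * n) * D ^ (2 * n))‖) ∧
    (Summable fun n : ℕ => ‖(((2 * n + 1)! : ℂ))⁻¹ • (η ^ (2 * n + 1) * D ^ (2 * n + 1))‖) ∧
    (Summable fun n : ℕ => ‖((d : ℂ) ^ (2 * n) / ((2 * n)! : ℂ)) • D ^ (2 * n)‖) ∧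
    (Summable fun n : ℕ => ‖((d : ℂ) ^ (2 * n + 1) / ((2 * n + 1)! : ℂ)) • D ^ (2 * n + 1)‖) ∧
    (Summable fun n : ℕ => ‖(((2 * n)! : ℂ))⁻¹ • (h ^ (2 * n) * D ^ (2 * n))‖) ∧
    (∑' n : ℕ, (((2 * n)! : ℂ))⁻¹ • (η ^ (2 * n) * D ^ (2 * n))) *
        (∑' n : ℕ, ((d : ℂ) ^ (2 * n) / ((2 * n)! : ℂ)) • D ^ (2 * n)) +
      (∑' n : ℕ, (((2 * n + 1)! : ℂ))⁻¹ • (η ^ (2 * n + 1) * D ^ (2 * n + 1))) *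
        (∑' n : ℕ, ((d : ℂ) ^ (2 * n + 1) / ((2 * n + 1)! : ℂ)) • D ^ (2 * n + 1)) =
      ∑' n : ℕ, (((2 * n)! : ℂ))⁻¹ • (h ^ (2 * n) * D ^ (2 * n)) := by
  simp only [← revExpTerm_smul_one]
  refine ⟨summable_norm_revExpTerm_two_mul D η, summable_norm_revExpTerm_two_mul_add_one D η,
    summable_norm_revExpTerm_two_mul D _, summable_norm_revExpTerm_two_mul_add_one D _,
    summable_norm_revExpTerm_two_mul D h, ?_⟩
  rw [hdef, add_comm _ η]
  exact revCosh_mul_add_revSinh_mul_of_commute ((Commute.one_left η).smul_left (d : ℂ))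
    ((Commute.one_left D).smul_left (d : ℂ))
end

section
/- Let A be a unital complex Banach algebra, let p, m ∈ A, set c := pm − mp, and assume cm = mc. Then Σ_{n≥0} ((−1)^n/(2n)!)·p^{2n}·m^{2n}·c = Σ_{n≥0} ((−1)^n/(2n+1)!)·p^{2n}·(p·m^{2n+1} − m^{2n+1}·p), both series being absolutely convergent. -/
open scoped Nat

lemma comm_pow_aux (A : Type*) [NormedRing A] [NormedAlgebra ℂ A]
    (p m c : A) (hc : c = p * m - m * p) (hcm : c * m = m * c) :
    ∀ k : ℕ, p * m ^ (k + 1) - m ^ (k + 1) * p = ((k + 1 : ℕ) : ℂ) • (m ^ k * c) := by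
  intro k
  induction k with
  | zero => simp [hc]
  | succ k ih =>
    have h1 : p * m ^ (k + 1) = m ^ (k + 1) * p + ((k + 1 : ℕ) : ℂ) • (m ^ k * c) := by
      have := ih; linear_combination (norm := noncomm_ring) this
    have h2 : p * m ^ (k + 2) = (p * m ^ (k + 1)) * m := by
      rw [pow_succ]; noncomm_ring
    rw [h2, h1]
    have h3 : m ^ (k + 1) * (p * m) = m ^ (k + 1) * (m * p) + m ^ (k + 1) * c := by
      rw [hc]; noncomm_ring
    push_cast
    rw [add_mul, smul_mul_assoc, mul_assoc (m ^ k) c m, hcm, ← mul_assoc (m^k) m c,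
      ← pow_succ, mul_assoc (m ^ (k+1)) p m, h3]
    rw [← mul_assoc, ← pow_succ]
    have : ((k : ℂ) + 1 + 1) • (m ^ (k + 1) * c)
        = m ^ (k + 1) * c + ((k : ℂ) + 1) • (m ^ (k + 1) * c) := by
      rw [add_smul, one_smul]; ring_nf; abel
    rw [this]; abel

/-- Abstract form of the operator relation `𝒞_η^‡ η_x = ∂_x⁻¹ 𝒮_η^‡ ∂_x − 𝒮_η^‡`
(multiplied through by `∂_x`): with `c := pm − mp` commuting with `m`,
`Σ ((−1)ⁿ/(2n)!) p²ⁿ m²ⁿ c = Σ ((−1)ⁿ/(2n+1)!) p²ⁿ (p m^{2n+1} − m^{2n+1} p)`. -/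
theorem stmt_7 (A : Type*) [NormedRing A] [NormedAlgebra ℂ A] [CompleteSpace A]
    (p m c : A) (hc : c = p * m - m * p) (hcm : c * m = m * c) :
    (Summable fun n : ℕ =>
      ‖((-1 : ℂ) ^ n / ((2 * n)! : ℂ)) • (p ^ (2 * n) * m ^ (2 * n) * c)‖) ∧
    (Summable fun n : ℕ =>
      ‖((-1 : ℂ) ^ n / ((2 * n + 1)! : ℂ)) •
        (p ^ (2 * n) * (p * m ^ (2 * n + 1) - m ^ (2 * n + 1) * p))‖) ∧
    ∑' n : ℕ, ((-1 : ℂ) ^ n / ((2 * n)! : ℂ)) • (p ^ (2 * n) * m ^ (2 * n) * c) =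
      ∑' n : ℕ, ((-1 : ℂ) ^ n / ((2 * n + 1)! : ℂ)) •
        (p ^ (2 * n) * (p * m ^ (2 * n + 1) - m ^ (2 * n + 1) * p)) := by
  -- termwise equality
  have hterm : ∀ n : ℕ,
      ((-1 : ℂ) ^ n / ((2 * n + 1)! : ℂ)) •
        (p ^ (2 * n) * (p * m ^ (2 * n + 1) - m ^ (2 * n + 1) * p))
      = ((-1 : ℂ) ^ n / ((2 * n)! : ℂ)) • (p ^ (2 * n) * m ^ (2 * n) * c) := by
    intro n
    have hk := comm_pow_aux A p m c hc hcm (2 * n)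
    rw [hk]
    have hfac : ((2 * n + 1)! : ℂ) = ((2 * n + 1 : ℕ) : ℂ) * ((2 * n)! : ℂ) := by
      rw [Nat.factorial_succ]; push_cast; ring
    have hne1 : ((2 * n + 1 : ℕ) : ℂ) ≠ 0 := Nat.cast_ne_zero.mpr (by omega)
    have hne2 : ((2 * n)! : ℂ) ≠ 0 := Nat.cast_ne_zero.mpr (Nat.factorial_ne_zero _)
    have hscal : ((-1 : ℂ) ^ n / ((2 * n + 1)! : ℂ)) * ((2 * n + 1 : ℕ) : ℂ)
        = (-1 : ℂ) ^ n / ((2 * n)! : ℂ) := by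
      rw [hfac, div_mul_eq_mul_div, mul_comm ((-1 : ℂ) ^ n) _, mul_div_mul_left _ _ hne1]
    rw [mul_smul_comm, smul_smul, hscal, ← mul_assoc]
  -- summability of the first series
  have hsum1 : Summable fun n : ℕ =>
      ‖((-1 : ℂ) ^ n / ((2 * n)! : ℂ)) • (p ^ (2 * n) * m ^ (2 * n) * c)‖ := by
    have hbase : Summable fun n : ℕ => (‖p‖ * ‖m‖) ^ (2 * n) / (2 * n)! * ‖c‖ := by
      have h := (Real.summable_pow_div_factorial (‖p‖ * ‖m‖)).comp_injective
        (fun a b h => by simp only at h; omega : Function.Injective fun n : ℕ => 2 * n)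
      exact h.mul_right ‖c‖
    refine Summable.of_nonneg_of_le (fun n => norm_nonneg _) (fun n => ?_) hbase
    rw [norm_smul]
    have h1 : ‖((-1 : ℂ) ^ n / ((2 * n)! : ℂ))‖ = 1 / (2 * n)! := by
      rw [norm_div, norm_pow, norm_neg, norm_one, one_pow]
      simp [Complex.norm_natCast]
    rw [h1]
    have h2 : ‖p ^ (2 * n) * m ^ (2 * n) * c‖ ≤ (‖p‖ * ‖m‖) ^ (2 * n) * ‖c‖ := by
      rcases n with _ | k
      · simp
      · calc ‖p ^ (2 * (k+1)) * m ^ (2 * (k+1)) * c‖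
            ≤ ‖p ^ (2 * (k+1)) * m ^ (2 * (k+1))‖ * ‖c‖ := norm_mul_le _ _
          _ ≤ ‖p ^ (2 * (k+1))‖ * ‖m ^ (2 * (k+1))‖ * ‖c‖ := by
              gcongr; exact norm_mul_le _ _
          _ ≤ ‖p‖ ^ (2 * (k+1)) * ‖m‖ ^ (2 * (k+1)) * ‖c‖ := by
              gcongr <;>
                [exact norm_pow_le' _ (by omega); exact norm_pow_le' _ (by omega)]
          _ = (‖p‖ * ‖m‖) ^ (2 * (k+1)) * ‖c‖ := by ring
    have hfpos : (0:ℝ) < (2 * n)! := by positivity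
    calc (1 / (2 * n)!) * ‖p ^ (2 * n) * m ^ (2 * n) * c‖
        ≤ (1 / (2 * n)!) * ((‖p‖ * ‖m‖) ^ (2 * n) * ‖c‖) := by gcongr
      _ = (‖p‖ * ‖m‖) ^ (2 * n) / (2 * n)! * ‖c‖ := by ring
  refine ⟨hsum1, ?_, ?_⟩
  · simpa only [hterm] using hsum1
  · exact (tsum_congr fun n => (hterm n).symm)
end

section
/- Let A be a unital complex Banach algebra, let p, m ∈ A, set c := pm − mp, and assume cm = mc. Then Σ_{n≥1} ((−1)^n/(2n)!)·p^{2n−1}·(p·m^{2n} − m^{2n}·p) = Σ_{n≥0} ((−1)^{n+1}/(2n+1)!)·p^{2n+1}·m^{2n+1}·c, both series being absolutely convergent. -/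
/-!
Because `c = pm − mp` commutes with `m`, the Leibniz rule gives `p m^{k+1} − m^{k+1} p = (k+1) m^k c`.
Hence the `n`-th terms of the two series agree, the factor `2n+2` cancelling against `(2n+2)!`,
and absolute convergence follows by comparison with the exponential series of `‖p‖ ‖m‖`.
-/

open scoped Nat

theorem mul_pow_succ_sub_pow_succ_mul {R : Type*} [Ring R] {p m : R}
    (h : Commute (p * m - m * p) m) (k : ℕ) :
    p * m ^ (k + 1) - m ^ (k + 1) * p = (k + 1) • (m ^ k * (p * m - m * p)) := by
  induction k with
  | zero => simp
  | succ k ih =>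
    calc p * m ^ (k + 2) - m ^ (k + 2) * p
        = (p * m ^ (k + 1) - m ^ (k + 1) * p) * m + m ^ (k + 1) * (p * m - m * p) := by
          rw [pow_succ _ (k + 1)]; noncomm_ring
      _ = (k + 2) • (m ^ (k + 1) * (p * m - m * p)) := by
          rw [ih, smul_mul_assoc, mul_assoc, h.eq, ← mul_assoc, ← pow_succ, ← succ_nsmul]

theorem div_factorial_succ_mul_cast_succ {K : Type*} [Field K] [CharZero K] (z : K) (k : ℕ) :
    z / (k + 1)! * (k + 1 : ℕ) = z / k ! := by
  rw [Nat.factorial_succ, Nat.cast_mul]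
  field_simp

theorem smul_pow_mul_commutator_pow_succ {K A : Type*} [Field K] [CharZero K] [Ring A]
    [Algebra K A] {p m : A} (h : Commute (p * m - m * p) m) (z : K) (k : ℕ) :
    (z / (k + 1)! : K) • (p ^ k * (p * m ^ (k + 1) - m ^ (k + 1) * p)) =
      (z / k ! : K) • (p ^ k * m ^ k * (p * m - m * p)) := by
  rw [mul_pow_succ_sub_pow_succ_mul h, mul_smul_comm, ← Nat.cast_smul_eq_nsmul K, smul_smul,
    div_factorial_succ_mul_cast_succ, mul_assoc]

theorem summable_norm_pow_succ_mul_pow_succ_mul_div_factorial {A : Type*} [NormedRing A]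
    (p m c : A) : Summable fun k : ℕ => ‖p ^ (k + 1) * m ^ (k + 1) * c‖ / (k + 1)! := by
  have hmaj : Summable fun k : ℕ => (‖p‖ * ‖m‖) ^ (k + 1) / (k + 1)! * ‖c‖ :=
    ((summable_nat_add_iff 1).mpr (Real.summable_pow_div_factorial _)).mul_right _
  refine hmaj.of_nonneg_of_le (fun k => by positivity) fun k => ?_
  rw [div_mul_eq_mul_div]
  gcongr
  calc ‖p ^ (k + 1) * m ^ (k + 1) * c‖ ≤ ‖p ^ (k + 1)‖ * ‖m ^ (k + 1)‖ * ‖c‖ :=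
        (norm_mul_le _ _).trans (by gcongr; exact norm_mul_le _ _)
    _ ≤ (‖p‖ * ‖m‖) ^ (k + 1) * ‖c‖ := by
        rw [mul_pow]; gcongr <;> exact norm_pow_le' _ k.succ_pos

theorem summable_norm_smul_pow_mul_pow_mul {𝕜 A : Type*} [RCLike 𝕜] [NormedRing A]
    [NormedAlgebra 𝕜 A] (p m c : A) :
    Summable fun n : ℕ =>
      ‖((-1 : 𝕜) ^ (n + 1) / ((2 * n + 1)! : 𝕜)) • (p ^ (2 * n + 1) * m ^ (2 * n + 1) * c)‖ := by
  simp_rw [norm_smul, norm_div, norm_pow, norm_neg, norm_one, one_pow, RCLike.norm_natCast,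
    one_div_mul_eq_div]
  exact (summable_norm_pow_succ_mul_pow_succ_mul_div_factorial p m c).comp_injective
    fun a b h => by simpa using h

theorem stmt_8_general (A : Type*) [NormedRing A] [NormedAlgebra ℂ A]
    (p m c : A) (hc : c = p * m - m * p) (hcm : c * m = m * c) :
    (Summable fun n : ℕ =>
      ‖((-1 : ℂ) ^ (n + 1) / ((2 * (n + 1))! : ℂ)) •
        (p ^ (2 * (n + 1) - 1) * (p * m ^ (2 * (n + 1)) - m ^ (2 * (n + 1)) * p))‖) ∧
    (Summable fun n : ℕ =>
      ‖((-1 : ℂ) ^ (n + 1) / ((2 * n + 1)! : ℂ)) • (p ^ (2 * n + 1) * m ^ (2 * n + 1) * c)‖) ∧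
    ∑' n : ℕ, ((-1 : ℂ) ^ (n + 1) / ((2 * (n + 1))! : ℂ)) •
        (p ^ (2 * (n + 1) - 1) * (p * m ^ (2 * (n + 1)) - m ^ (2 * (n + 1)) * p)) =
      ∑' n : ℕ, ((-1 : ℂ) ^ (n + 1) / ((2 * n + 1)! : ℂ)) •
        (p ^ (2 * n + 1) * m ^ (2 * n + 1) * c) := by
  subst hc
  have hterm (n : ℕ) :
      ((-1 : ℂ) ^ (n + 1) / ((2 * (n + 1))! : ℂ)) •
          (p ^ (2 * (n + 1) - 1) * (p * m ^ (2 * (n + 1)) - m ^ (2 * (n + 1)) * p)) =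
        ((-1 : ℂ) ^ (n + 1) / ((2 * n + 1)! : ℂ)) •
          (p ^ (2 * n + 1) * m ^ (2 * n + 1) * (p * m - m * p)) := by
    rw [show 2 * (n + 1) = 2 * n + 1 + 1 by ring, Nat.add_sub_cancel]
    exact smul_pow_mul_commutator_pow_succ hcm _ _
  refine ⟨?_, summable_norm_smul_pow_mul_pow_mul p m _, tsum_congr hterm⟩
  simpa only [hterm] using summable_norm_smul_pow_mul_pow_mul (𝕜 := ℂ) p m _

/-- Abstract form of the operator relation `𝒮_η^‡ η_x = 𝒞_η^‡ − ∂_x⁻¹ 𝒞_η^‡ ∂_x`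
(multiplied through by `∂_x`): with `c := pm − mp` commuting with `m`,
`Σ_{n≥1} ((−1)ⁿ/(2n)!) p^{2n−1} (p m^{2n} − m^{2n} p)
  = Σ_{n≥0} ((−1)^{n+1}/(2n+1)!) p^{2n+1} m^{2n+1} c`. -/
theorem stmt_8 (A : Type*) [NormedRing A] [NormedAlgebra ℂ A] [CompleteSpace A]
    (p m c : A) (hc : c = p * m - m * p) (hcm : c * m = m * c) :
    (Summable fun n : ℕ =>
      ‖((-1 : ℂ) ^ (n + 1) / ((2 * (n + 1))! : ℂ)) •
        (p ^ (2 * (n + 1) - 1) * (p * m ^ (2 * (n + 1)) - m ^ (2 * (n + 1)) * p))‖) ∧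
    (Summable fun n : ℕ =>
      ‖((-1 : ℂ) ^ (n + 1) / ((2 * n + 1)! : ℂ)) • (p ^ (2 * n + 1) * m ^ (2 * n + 1) * c)‖) ∧
    ∑' n : ℕ, ((-1 : ℂ) ^ (n + 1) / ((2 * (n + 1))! : ℂ)) •
        (p ^ (2 * (n + 1) - 1) * (p * m ^ (2 * (n + 1)) - m ^ (2 * (n + 1)) * p)) =
      ∑' n : ℕ, ((-1 : ℂ) ^ (n + 1) / ((2 * n + 1)! : ℂ)) •
        (p ^ (2 * n + 1) * m ^ (2 * n + 1) * c) :=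
  stmt_8_general A p m c hc hcm
end

section
/- Let f: ℂ → ℂ be entire, let d: ℝ → ℝ be differentiable and η: ℝ → ℝ be any function, and set h := d + η, z_s(x) := x + iη(x), z_b(x) := x − i d(x). Define g₀ := f ∘ z_b and g_{n+1}(x) := g_n'(x)/(1 − id'(x)). Then for every x ∈ ℝ the series Σ_{n≥0} (i h(x))^n g_n(x)/n! converges absolutely and its sum equals f(z_s(x)). -/
open scoped Nat

/-! The bottom parametrisation `z_b` has nonvanishing derivative `1 - i d'`, so the chain rule
turns `g ↦ g' / (1 - i d')` into complex differentiation along the bottom: `g n = f⁽ⁿ⁾ ∘ z_b`.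
The series is then the Taylor series of `f` at `z_b x` evaluated at `z_s x = z_b x + i h x`,
which converges to `f (z_s x)` because `f` is entire. Absolute convergence comes from comparing
with the (convergent, hence bounded) Taylor series at the doubled displacement. -/

namespace Complex

theorem summable_norm_taylorSeries_of_entire {E : Type*} [NormedAddCommGroup E]
    [NormedSpace ℂ E] [CompleteSpace E] {f : ℂ → E} (hf : Differentiable ℂ f) (c z : ℂ) :
    Summable fun n : ℕ => ‖(n ! : ℂ)⁻¹ • (z - c) ^ n • iteratedDeriv n f c‖ := by
  set a : ℕ → E := fun n => (n ! : ℂ)⁻¹ • (2 * (z - c)) ^ n • iteratedDeriv n f c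
  have ha : Filter.Tendsto a Filter.atTop (nhds 0) := by
    have := (hasSum_taylorSeries_of_entire hf c (c + 2 * (z - c))).summable.tendsto_atTop_zero
    simpa only [add_sub_cancel_left] using this
  obtain ⟨C, hC⟩ := ha.norm.bddAbove_range
  refine Summable.of_nonneg_of_le (fun n => norm_nonneg _) (fun n => ?_)
    (summable_geometric_two.mul_left C)
  calc ‖(n ! : ℂ)⁻¹ • (z - c) ^ n • iteratedDeriv n f c‖ = ‖a n‖ * (1 / 2) ^ n := by
        simp only [a, norm_smul, norm_pow, norm_mul, Complex.norm_ofNat]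
        have h2 : (2 : ℝ) ^ n * (1 / 2) ^ n = 1 := by rw [← mul_pow]; norm_num
        linear_combination (-(‖(n ! : ℂ)⁻¹‖ * ‖z - c‖ ^ n * ‖iteratedDeriv n f c‖)) * h2
    _ ≤ C * (1 / 2) ^ n := by gcongr; exact hC (Set.mem_range_self n)

theorem one_sub_I_mul_ofReal_ne_zero (t : ℝ) : 1 - I * (t : ℂ) ≠ 0 := by
  intro H
  simpa using congrArg re H

theorem hasDerivAt_ofReal_sub_I_mul {d : ℝ → ℝ} {x : ℝ} (hd : DifferentiableAt ℝ d x) :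
    HasDerivAt (fun y : ℝ => (y : ℂ) - I * (d y : ℂ)) (1 - I * ((deriv d x : ℝ) : ℂ)) x :=
  (hasDerivAt_id x).ofReal_comp.sub (hd.hasDerivAt.ofReal_comp.const_mul I)

end Complex

theorem eq_iteratedDeriv_comp_of_deriv_div {f : ℂ → ℂ} (hf : Differentiable ℂ f)
    {γ γ' : ℝ → ℂ} (hγ : ∀ x, HasDerivAt γ (γ' x) x) (hγ' : ∀ x, γ' x ≠ 0)
    {g : ℕ → ℝ → ℂ} (hg0 : g 0 = f ∘ γ) (hgs : ∀ n x, g (n + 1) x = deriv (g n) x / γ' x) :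
    ∀ n, g n = iteratedDeriv n f ∘ γ
  | 0 => by rw [hg0, iteratedDeriv_zero]
  | n + 1 => by
    funext x
    have hfn : Differentiable ℂ (iteratedDeriv n f) :=
      hf.contDiff.differentiable_iteratedDeriv n (WithTop.coe_lt_top _)
    have hchain : HasDerivAt (iteratedDeriv n f ∘ γ) (deriv (iteratedDeriv n f) (γ x) * γ' x) x :=
      (hfn (γ x)).hasDerivAt.comp x (hγ x)
    rw [hgs, eq_iteratedDeriv_comp_of_deriv_div hf hγ hγ' hg0 hgs n, hchain.deriv,
      mul_div_cancel_right₀ _ (hγ' x), Function.comp_apply, iteratedDeriv_succ]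

/-- The paper's relation `f(z_s) = exp[ih ∂_{z_b}] f(z_b)`: the Taylor series of the
entire complex potential from the bottom `z_b = x − id` up to the free surface
`z_s = x + iη`, with `h = d + η` and `g_{n+1} = g_n'/(1 − id')`. -/
theorem stmt_11 (f : ℂ → ℂ) (hf : Differentiable ℂ f)
    (d : ℝ → ℝ) (hd : Differentiable ℝ d) (η : ℝ → ℝ)
    (h : ℝ → ℝ) (hdef : ∀ x : ℝ, h x = d x + η x)
    (zs zb : ℝ → ℂ) (hzs : ∀ x : ℝ, zs x = (x : ℂ) + Complex.I * (η x : ℂ))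
    (hzb : ∀ x : ℝ, zb x = (x : ℂ) - Complex.I * (d x : ℂ))
    (g : ℕ → ℝ → ℂ) (hg0 : g 0 = f ∘ zb)
    (hgs : ∀ n : ℕ, ∀ x : ℝ, g (n + 1) x = deriv (g n) x / (1 - Complex.I * Complex.ofReal (deriv d x))) :
    ∀ x : ℝ,
      (Summable fun n : ℕ => ‖(Complex.I * (h x : ℂ)) ^ n * g n x / (n ! : ℂ)‖) ∧
      ∑' n : ℕ, (Complex.I * (h x : ℂ)) ^ n * g n x / (n ! : ℂ) = f (zs x) := by
  have hzb_deriv : ∀ x, HasDerivAt zb (1 - Complex.I * ((deriv d x : ℝ) : ℂ)) x := by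
    rw [funext hzb]
    exact fun x => Complex.hasDerivAt_ofReal_sub_I_mul (hd x)
  have hg := eq_iteratedDeriv_comp_of_deriv_div hf hzb_deriv
    (fun x => Complex.one_sub_I_mul_ofReal_ne_zero _) hg0 hgs
  intro x
  have hdisp : zs x - zb x = Complex.I * (h x : ℂ) := by
    rw [hzs, hzb, hdef]
    push_cast
    ring
  have hterm : ∀ n : ℕ, (Complex.I * (h x : ℂ)) ^ n * g n x / (n ! : ℂ) =
      (n ! : ℂ)⁻¹ • (zs x - zb x) ^ n • iteratedDeriv n f (zb x) := by
    intro n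
    rw [hg, hdisp, Function.comp_apply, smul_eq_mul, smul_eq_mul]
    ring
  simp only [hterm]
  exact ⟨Complex.summable_norm_taylorSeries_of_entire hf _ _,
    Complex.taylorSeries_eq_of_entire hf _ _⟩
end

section
/- Let f: ℂ → ℂ be entire, let η: ℝ → ℝ be differentiable and d: ℝ → ℝ be any function, and set h := d + η, z_s(x) := x + iη(x), z_b(x) := x − i d(x). Define g₀ := f ∘ z_s and g_{n+1}(x) := g_n'(x)/(1 + iη'(x)). Assume the bottom impermeability condition Im f(z_b(x)) = 0 for all x ∈ ℝ (the bottom is the streamline ψ_b = 0). Then for every x the series Σ_{n≥0} (−i h(x))^n g_n(x)/n! converges to the real number Re f(z_b(x)); in particular its imaginary part vanishes: Im[ Σ_{n≥0} (−i h(x))^n g_n(x)/n! ] = 0 for all x. -/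
open scoped Nat

/-- If the bottom is the streamline `ψ_b = 0` (i.e. `Im f(z_b) = 0`), then the series
`exp[−ih ∂_{z_s}] f(z_s)` converges to the real number `Re f(z_b)`; in particular its
imaginary part vanishes. -/
theorem stmt_12 (f : ℂ → ℂ) (hf : Differentiable ℂ f)
    (η : ℝ → ℝ) (hη : Differentiable ℝ η) (d : ℝ → ℝ)
    (h : ℝ → ℝ) (hdef : ∀ x : ℝ, h x = d x + η x)
    (zs zb : ℝ → ℂ) (hzs : ∀ x : ℝ, zs x = (x : ℂ) + Complex.I * (η x : ℂ))
    (hzb : ∀ x : ℝ, zb x = (x : ℂ) - Complex.I * (d x : ℂ))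
    (g : ℕ → ℝ → ℂ) (hg0 : g 0 = f ∘ zs)
    (hgs : ∀ n : ℕ, ∀ x : ℝ, g (n + 1) x = deriv (g n) x / (1 + Complex.I * Complex.ofReal (deriv η x)))
    (himp : ∀ x : ℝ, (f (zb x)).im = 0) :
    ∀ x : ℝ,
      (Summable fun n : ℕ => ‖(-Complex.I * (h x : ℂ)) ^ n * g n x / (n ! : ℂ)‖) ∧
      (∑' n : ℕ, (-Complex.I * (h x : ℂ)) ^ n * g n x / (n ! : ℂ) = ((f (zb x)).re : ℂ)) ∧
      (∑' n : ℕ, (-Complex.I * (h x : ℂ)) ^ n * g n x / (n ! : ℂ)).im = 0 := by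
  -- differentiability of iterated derivatives of the entire function `f`
  have hFd : ∀ n : ℕ, Differentiable ℂ (iteratedDeriv n f) := fun n =>
    (hf.contDiff (n := ⊤)).differentiable_iteratedDeriv n
      (by exact_mod_cast WithTop.coe_lt_top (n : ℕ∞))
  -- derivative of `zs`
  have hzsd : ∀ x : ℝ, HasDerivAt zs (1 + Complex.I * Complex.ofReal (deriv η x)) x := by
    intro x
    have h1 : HasDerivAt (fun y : ℝ => (y : ℂ)) 1 x := Complex.ofRealCLM.hasDerivAt
    have h2 : HasDerivAt (fun y : ℝ => ((η y : ℝ) : ℂ)) (Complex.ofReal (deriv η x)) x :=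
      ((hη x).hasDerivAt).ofReal_comp
    have h3 : HasDerivAt (fun y : ℝ => (y : ℂ) + Complex.I * ((η y : ℝ) : ℂ))
        (1 + Complex.I * Complex.ofReal (deriv η x)) x := h1.add (h2.const_mul Complex.I)
    exact h3.congr_of_eventuallyEq (Filter.Eventually.of_forall fun y => (hzs y))
  -- `1 + I η'` is nonzero
  have hw : ∀ x : ℝ, (1 + Complex.I * Complex.ofReal (deriv η x)) ≠ 0 := by
    intro x hx
    have : (1 + Complex.I * Complex.ofReal (deriv η x)).re = 0 := by rw [hx]; simp
    simp at this
  -- `g n x = iteratedDeriv n f (zs x)`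
  have hgen : ∀ n : ℕ, ∀ x : ℝ, g n x = iteratedDeriv n f (zs x) := by
    intro n
    induction n with
    | zero => intro x; rw [hg0]; simp
    | succ n ih =>
      intro x
      have hgeq : g n = fun y => iteratedDeriv n f (zs y) := funext ih
      have hF' : HasDerivAt (iteratedDeriv n f) (iteratedDeriv (n + 1) f (zs x)) (zs x) := by
        rw [iteratedDeriv_succ]
        exact ((hFd n) (zs x)).hasDerivAt
      have hcomp : HasDerivAt (fun y : ℝ => iteratedDeriv n f (zs y))
          (iteratedDeriv (n + 1) f (zs x) * (1 + Complex.I * Complex.ofReal (deriv η x))) x :=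
        hF'.comp x (hzsd x)
      rw [hgs n x, hgeq, hcomp.deriv, mul_div_assoc, div_self (hw x), mul_one]
  intro x
  -- geometry: `zb x = zs x + (-I * h x)`
  have hzbzs : zb x = zs x + (-Complex.I * (h x : ℂ)) := by
    rw [hzb, hzs, hdef]
    push_cast
    ring
  have hdiff : zb x - zs x = -Complex.I * (h x : ℂ) := by rw [hzbzs]; ring
  -- the Taylor series of `f` at `zs x`, evaluated at `zb x`
  have hs : HasSum (fun n : ℕ => ((n ! : ℂ))⁻¹ • (zb x - zs x) ^ n • iteratedDeriv n f (zs x))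
      (f (zb x)) := Complex.hasSum_taylorSeries_of_entire hf (zs x) (zb x)
  have hterm : ∀ n : ℕ, ((n ! : ℂ))⁻¹ • (zb x - zs x) ^ n • iteratedDeriv n f (zs x)
      = (-Complex.I * (h x : ℂ)) ^ n * g n x / (n ! : ℂ) := by
    intro n
    rw [hdiff, hgen n x, smul_eq_mul, smul_eq_mul]
    ring
  have hs' : HasSum (fun n : ℕ => (-Complex.I * (h x : ℂ)) ^ n * g n x / (n ! : ℂ)) (f (zb x)) := by
    exact (funext hterm) ▸ hs
  -- summability of norms, via boundedness of the Taylor series at a larger radius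
  have hsum_norm : Summable fun n : ℕ => ‖(-Complex.I * (h x : ℂ)) ^ n * g n x / (n ! : ℂ)‖ := by
    set R : ℝ := |h x| + 1 with hR
    have hR1 : (0 : ℝ) < R := by positivity
    have hs2 : HasSum (fun n : ℕ =>
        ((n ! : ℂ))⁻¹ • ((zs x + (R : ℂ)) - zs x) ^ n • iteratedDeriv n f (zs x))
        (f (zs x + (R : ℂ))) := Complex.hasSum_taylorSeries_of_entire hf (zs x) _
    have hb : BddAbove (Set.range fun n : ℕ =>
        ‖((n ! : ℂ))⁻¹ • ((zs x + (R : ℂ)) - zs x) ^ n • iteratedDeriv n f (zs x)‖) :=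
      (hs2.summable.tendsto_atTop_zero.norm.bddAbove_range)
    obtain ⟨M, hM⟩ := hb
    have hMle : ∀ n : ℕ, ‖iteratedDeriv n f (zs x)‖ / n ! * R ^ n ≤ M := by
      intro n
      have := hM (Set.mem_range_self n)
      simp only [add_sub_cancel_left, norm_smul, norm_pow, norm_inv, Complex.norm_natCast] at this
      calc ‖iteratedDeriv n f (zs x)‖ / n ! * R ^ n
          = (n ! : ℝ)⁻¹ * (‖(R : ℂ)‖ ^ n * ‖iteratedDeriv n f (zs x)‖) := by
            rw [Complex.norm_real, Real.norm_eq_abs, abs_of_pos hR1]; ring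
        _ ≤ M := this
    refine Summable.of_nonneg_of_le (fun n => norm_nonneg _)
      (fun n => ?_) (Summable.mul_left M (summable_geometric_of_lt_one
        (r := |h x| / R) (by positivity) (by rw [div_lt_one hR1, hR]; exact lt_add_one _)))
    have hfacpos : (0 : ℝ) < (n ! : ℝ) := by positivity
    have key : ‖(-Complex.I * (h x : ℂ)) ^ n * g n x / (n ! : ℂ)‖
        = ‖iteratedDeriv n f (zs x)‖ / n ! * |h x| ^ n := by
      rw [hgen n x]
      simp only [norm_div, norm_mul, norm_pow, norm_neg, Complex.norm_I, one_mul,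
        Complex.norm_real, Real.norm_eq_abs, Complex.norm_natCast]
      ring
    rw [key]
    have h1 : |h x| ^ n = (|h x| / R) ^ n * R ^ n := by
      rw [div_pow, div_mul_cancel₀]
      positivity
    rw [h1]
    calc ‖iteratedDeriv n f (zs x)‖ / n ! * ((|h x| / R) ^ n * R ^ n)
        = (‖iteratedDeriv n f (zs x)‖ / n ! * R ^ n) * (|h x| / R) ^ n := by ring
      _ ≤ M * (|h x| / R) ^ n := by
          apply mul_le_mul_of_nonneg_right (hMle n)
          positivity
  have hfre : f (zb x) = ((f (zb x)).re : ℂ) := by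
    have him := himp x
    apply Complex.ext <;> simp [him]
  refine ⟨hsum_norm, ?_, ?_⟩
  · rw [hs'.tsum_eq]; exact hfre
  · rw [hs'.tsum_eq]; exact himp x
end

section
/- Let d, η: ℝ → ℝ be smooth (C^∞) functions, set h := d + η, and for smooth φ: ℝ → ℝ define ℛ₂φ := −(1/2)d²φ'' − d(ηφ')' − (1/2)(η²φ')', ℐ₂φ := −(1/6)d³φ'' − (1/2)d²(ηφ)'' − (1/2)d(η²φ)'' − (1/6)(η³φ)'', and 𝒥₂φ := (1/2)h²d''φ + h h' d' φ − h (d')² φ + (1/3)(h³φ')'. Then for every smooth φ: ℝ → ℝ and every x ∈ ℝ, (ℐ₂φ)(x) − (ℛ₂(hφ))(x) = (𝒥₂φ)(x). -/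
/-- The second-order shallow-water operator `ℛ₂φ = −½d²φ'' − d(ηφ')' − ½(η²φ')'`. -/
noncomputable def R2 (d η φ : ℝ → ℝ) (x : ℝ) : ℝ :=
  -(1 / 2) * d x ^ 2 * deriv (deriv φ) x
    - d x * deriv (fun y => η y * deriv φ y) x
    - (1 / 2) * deriv (fun y => η y ^ 2 * deriv φ y) x

/-- The second-order shallow-water operator
`ℐ₂φ = −(1/6)d³φ'' − ½d²(ηφ)'' − ½d(η²φ)'' − (1/6)(η³φ)''`. -/
noncomputable def I2 (d η φ : ℝ → ℝ) (x : ℝ) : ℝ :=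
  -(1 / 6) * d x ^ 3 * deriv (deriv φ) x
    - (1 / 2) * d x ^ 2 * deriv (deriv (fun y => η y * φ y)) x
    - (1 / 2) * d x * deriv (deriv (fun y => η y ^ 2 * φ y)) x
    - (1 / 6) * deriv (deriv (fun y => η y ^ 3 * φ y)) x

/-- The second-order shallow-water operator
`𝒥₂φ = ½h²d''φ + hh'd'φ − h(d')²φ + ⅓(h³φ')'`, with `h = d + η`. -/
noncomputable def J2 (d η φ : ℝ → ℝ) (x : ℝ) : ℝ :=
  (1 / 2) * (d x + η x) ^ 2 * deriv (deriv d) x * φ x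
    + (d x + η x) * deriv (fun y => d y + η y) x * deriv d x * φ x
    - (d x + η x) * (deriv d x) ^ 2 * φ x
    + (1 / 3) * deriv (fun y => (d y + η y) ^ 3 * deriv φ y) x

private lemma keymul (f g : ℝ → ℝ) (hf : ContDiff ℝ (⊤:ℕ∞) f) (hg : ContDiff ℝ (⊤:ℕ∞) g) :
    deriv (fun y => f y * g y) = fun y => deriv f y * g y + f y * deriv g y :=
  funext fun y => deriv_fun_mul (hf.differentiable (by simp) y) (hg.differentiable (by simp) y)

private lemma keyadd (f g : ℝ → ℝ) (hf : ContDiff ℝ (⊤:ℕ∞) f) (hg : ContDiff ℝ (⊤:ℕ∞) g) :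
    deriv (fun y => f y + g y) = fun y => deriv f y + deriv g y :=
  funext fun y => deriv_fun_add (hf.differentiable (by simp) y) (hg.differentiable (by simp) y)

/-- The order-2 relation `𝒥₂ = ℐ₂ − ℛ₂∘(multiplication by h)` of the shallow-water
expansion of the Dirichlet–Neumann operator, with `h = d + η`. -/
theorem stmt_15 (d η : ℝ → ℝ) (hd : ContDiff ℝ (⊤ : ℕ∞) d) (hη : ContDiff ℝ (⊤ : ℕ∞) η) :
    ∀ φ : ℝ → ℝ, ContDiff ℝ (⊤ : ℕ∞) φ → ∀ x : ℝ,
      I2 d η φ x - R2 d η (fun y => (d y + η y) * φ y) x = J2 d η φ x := by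
  intro φ hφ x
  replace hd : ContDiff ℝ (⊤ : ℕ∞) d := hd.of_le (by exact_mod_cast le_top)
  replace hη : ContDiff ℝ (⊤ : ℕ∞) η := hη.of_le (by exact_mod_cast le_top)
  replace hφ : ContDiff ℝ (⊤ : ℕ∞) φ := hφ.of_le (by exact_mod_cast le_top)
  have hd' : ContDiff ℝ (⊤ : ℕ∞) (deriv d) := (contDiff_infty_iff_deriv.mp hd).2
  have hη' : ContDiff ℝ (⊤ : ℕ∞) (deriv η) := (contDiff_infty_iff_deriv.mp hη).2
  have hφ' : ContDiff ℝ (⊤ : ℕ∞) (deriv φ) := (contDiff_infty_iff_deriv.mp hφ).2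
  have Hd : Differentiable ℝ d := hd.differentiable (by simp)
  have Hη : Differentiable ℝ η := hη.differentiable (by simp)
  have Hφ : Differentiable ℝ φ := hφ.differentiable (by simp)
  have Hd' : Differentiable ℝ (deriv d) := hd'.differentiable (by simp)
  have Hη' : Differentiable ℝ (deriv η) := hη'.differentiable (by simp)
  have Hφ' : Differentiable ℝ (deriv φ) := hφ'.differentiable (by simp)
  unfold I2 R2 J2
  simp only [pow_succ, pow_zero, one_mul]
  simp only [keymul η φ hη hφ,
    keymul η η hη hη,
    keymul (fun y => η y * η y) φ (hη.mul hη) hφ,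
    keymul (fun y => η y * η y) η (hη.mul hη) hη,
    keymul (fun y => η y * η y * η y) φ ((hη.mul hη).mul hη) hφ,
    keyadd d η hd hη,
    keymul (fun y => d y + η y) φ (hd.add hη) hφ]
  simp (disch := fun_prop) only [deriv_fun_add, deriv_fun_mul]
  ring
end
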